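/- Deterministic-MDP version of the value difference with shaped rewards: let V^π and V'^π denote the value functions of policy π under reward r and shaped reward r'(x,u) = r(x,u) + γΦ(f(x,u)) − Φ(x) respectively, in a deterministic infinite-horizon discounted MDP. Then V'^π(x) = V^π(x) − Φ(x) for every state x, and hence argmax_π V'^π(x) = argmax_π V^π(x) for every x (the optimal policy is unchanged). -/

import Mathlib

/-!
Along a trajectory the discounted shaping terms `γ^(t+1) Φ(x_{t+1}) - γ^t Φ(x_t)` telescope, and
since `γ^t Φ(x_t)` is summable their sum is `-Φ(x_0)`. So shaping shifts every value `V^π(x)` by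
the same constant `-Φ(x)`, which leaves the maximizing policies unchanged.
-/

/-- Trajectory of a deterministic stationary policy `π` from state `x`. -/
def trajP {X U : Type*} (f : X → U → X) (π : X → U) (x : X) : ℕ → X
  | 0 => x
  | t + 1 => f (trajP f π x t) (π (trajP f π x t))

/-- Infinite-horizon discounted value of policy `π` from state `x` under reward `r`. -/
noncomputable def Vval {X U : Type*} (γ : ℝ) (f : X → U → X) (r : X → U → ℝ)
    (π : X → U) (x : X) : ℝ :=
  ∑' t : ℕ, γ ^ t * r (trajP f π x t) (π (trajP f π x t))

theorem summable_pow_mul_of_abs_le {γ : ℝ} (hγ : |γ| < 1) {h : ℕ → ℝ} {M : ℝ}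
    (hM : ∀ t, |h t| ≤ M) : Summable fun t => γ ^ t * h t := by
  refine .of_norm_bounded ((summable_geometric_of_lt_one (abs_nonneg γ) hγ).mul_left M)
    fun t => ?_
  rw [Real.norm_eq_abs, abs_mul, abs_pow, mul_comm]
  exact mul_le_mul_of_nonneg_right (hM t) (pow_nonneg (abs_nonneg γ) t)

theorem HasSum.succ_sub {G : Type*} [AddCommGroup G] [TopologicalSpace G]
    [IsTopologicalAddGroup G] {g : ℕ → G} {a : G} (h : HasSum g a) :
    HasSum (fun t => g (t + 1) - g t) (-g 0) := by
  have hsucc : HasSum (fun t => g (t + 1)) (a - g 0) := by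
    simpa using (hasSum_nat_add_iff' 1).2 h
  simpa using hsucc.sub h

theorem trajP_succ {X U : Type*} (f : X → U → X) (π : X → U) (x : X) (t : ℕ) :
    trajP f π x (t + 1) = f (trajP f π x t) (π (trajP f π x t)) :=
  rfl

theorem Vval_shaped_eq_sub {X U : Type*} {γ : ℝ} {f : X → U → X} {r r' : X → U → ℝ} {Φ : X → ℝ}
    {π : X → U} {x : X}
    (hr : Summable fun t => γ ^ t * r (trajP f π x t) (π (trajP f π x t)))
    (hΦ : Summable fun t => γ ^ t * Φ (trajP f π x t))
    (hr' : ∀ y u, r' y u = r y u + γ * Φ (f y u) - Φ y) :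
    Vval γ f r' π x = Vval γ f r π x - Φ x := by
  have hstep : ∀ t, γ ^ t * r' (trajP f π x t) (π (trajP f π x t)) =
      γ ^ t * r (trajP f π x t) (π (trajP f π x t)) +
        (γ ^ (t + 1) * Φ (trajP f π x (t + 1)) - γ ^ t * Φ (trajP f π x t)) := by
    intro t
    rw [hr', trajP_succ]
    ring
  have hsum : HasSum (fun t => γ ^ t * r' (trajP f π x t) (π (trajP f π x t)))
      (Vval γ f r π x - Φ x) := by
    simpa only [← hstep, pow_zero, one_mul, ← sub_eq_add_neg, trajP.eq_1, Vval] using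
      hr.hasSum.add hΦ.hasSum.succ_sub
  exact hsum.tsum_eq

theorem potential_shaping_invariance
    {X U : Type*} (γ : ℝ) (hγ : γ ∈ Set.Ioo (0:ℝ) 1)
    (f : X → U → X) (r r' : X → U → ℝ) (Φ : X → ℝ)
    (Mr : ℝ) (hr : ∀ x u, |r x u| ≤ Mr)
    (MΦ : ℝ) (hΦ : ∀ x, |Φ x| ≤ MΦ)
    (hr' : ∀ x u, r' x u = r x u + γ * Φ (f x u) - Φ x) :
    (∀ (π : X → U) (x : X), Vval γ f r' π x = Vval γ f r π x - Φ x) ∧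
    (∀ (x : X) (π : X → U),
      (∀ π'' : X → U, Vval γ f r π'' x ≤ Vval γ f r π x) ↔
      (∀ π'' : X → U, Vval γ f r' π'' x ≤ Vval γ f r' π x)) := by
  have hγ_abs : |γ| < 1 := abs_lt.2 ⟨by linarith [hγ.1], hγ.2⟩
  have hV : ∀ (π : X → U) (x : X), Vval γ f r' π x = Vval γ f r π x - Φ x := fun _ _ =>
    Vval_shaped_eq_sub (summable_pow_mul_of_abs_le hγ_abs fun _ => hr _ _)
      (summable_pow_mul_of_abs_le hγ_abs fun _ => hΦ _) hr'
  refine ⟨hV, fun x π => ?_⟩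
  simp only [hV, sub_le_sub_iff_right]
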